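/- For all n ≥ 4, the number of permutations of {1,...,n} with an odd number of runs equals the number of permutations with an even number of runs; equivalently, the polynomial R_n(x) = Σ_k R(n,k) x^k is divisible by (x+1). -/

import Mathlib

/-! The runs of a permutation alternate between ascending and descending, so their number is odd
exactly when the first and the last step go the same way. For `n ≥ 4`, exchanging the last two
entries reverses the last step without touching the first, so it is an involution reversing the
parity of the number of runs. Hence `R_n(-1) = #even - #odd = 0`. -/

open Finset

/-- The value of the permutation `p` at (0-indexed) position `i`, as a natural number. -/
def permVal (n : ℕ) (p : Equiv.Perm (Fin n)) (i : ℕ) : ℕ :=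
  if h : i < n then (p ⟨i, h⟩ : ℕ) else 0

/-- `p` changes direction at 0-indexed interior position `i` (peak or valley). -/
def dirChange (n : ℕ) (p : Equiv.Perm (Fin n)) (i : ℕ) : Prop :=
  (permVal n p (i-1) < permVal n p i ∧ permVal n p (i+1) < permVal n p i) ∨
  (permVal n p i < permVal n p (i-1) ∧ permVal n p i < permVal n p (i+1))

instance (n : ℕ) (p : Equiv.Perm (Fin n)) : DecidablePred (dirChange n p) := fun i => by
  unfold dirChange; infer_instance

/-- Number of runs of a permutation: one more than the number of interior direction changes. -/
def numRuns (n : ℕ) (p : Equiv.Perm (Fin n)) : ℕ :=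
  ((Finset.Ico 1 (n-1)).filter (dirChange n p)).card + 1

/-- `R n k` is the number of permutations of `{1,...,n}` with exactly `k` runs. -/
def R (n k : ℕ) : ℕ :=
  (Finset.univ.filter (fun p : Equiv.Perm (Fin n) => numRuns n p = k)).card

/-- Number of descents of a permutation. -/
def numDescents (n : ℕ) (p : Equiv.Perm (Fin n)) : ℕ :=
  ((Finset.range (n-1)).filter (fun i => permVal n p (i+1) < permVal n p i)).card

/-- `A n k`: Eulerian numbers, counting permutations with `k` descents. -/
def A (n k : ℕ) : ℕ :=
  (Finset.univ.filter (fun p : Equiv.Perm (Fin n) => numDescents n p = k)).card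

/-- The run-generating polynomial `R_n(x) = Σ_k R(n,k) x^k`. -/
noncomputable def Rpoly (n : ℕ) : Polynomial ℤ :=
  ∑ k ∈ Finset.range n, Polynomial.C ((R n k : ℤ)) * Polynomial.X ^ k

/-- `p` is `j`-half-ascending: `p_{n+1-2i} < p_{n+2-2i}` (1-indexed) for all `1 ≤ i ≤ j`. -/
def HalfAscJ (n j : ℕ) (p : Equiv.Perm (Fin n)) : Prop :=
  ∀ i ∈ Finset.Icc 1 j, permVal n p (n - 2*i) < permVal n p (n + 1 - 2*i)

instance (n j : ℕ) : DecidablePred (HalfAscJ n j) := fun p => by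
  unfold HalfAscJ; infer_instance

/-- For `n` even: `p` is half-ascending if `p_{2i-1} < p_{2i}` (1-indexed) for `1 ≤ i ≤ n/2`. -/
def HalfAsc (n : ℕ) (p : Equiv.Perm (Fin n)) : Prop :=
  ∀ i ∈ Finset.range (n/2), permVal n p (2*i) < permVal n p (2*i+1)

instance (n : ℕ) : DecidablePred (HalfAsc n) := fun p => by
  unfold HalfAsc; infer_instance

/-- `U n k`: number of half-ascending permutations with exactly `k` descents. -/
def U (n k : ℕ) : ℕ :=
  (Finset.univ.filter (fun p : Equiv.Perm (Fin n) =>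
    HalfAsc n p ∧ numDescents n p = k)).card

/-- Number of runs of the prefix `p_1, ..., p_L` (1-indexed). -/
def prefixRuns (n L : ℕ) (p : Equiv.Perm (Fin n)) : ℕ :=
  ((Finset.Ico 1 (L-1)).filter (dirChange n p)).card + 1

/-- Number of descents of the suffix starting at 0-indexed position `a`. -/
def suffixDescents (n a : ℕ) (p : Equiv.Perm (Fin n)) : ℕ :=
  ((Finset.Ico a (n-1)).filter (fun i => permVal n p (i+1) < permVal n p i)).card

/-- `t_j(p) = r_j(p) + s_j(p)`: runs of the prefix `p_1..p_{n-2j}` plus descents of the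
suffix `p_{n-2j}..p_n`. -/
def tstat (n j : ℕ) (p : Equiv.Perm (Fin n)) : ℕ :=
  prefixRuns n (n - 2*j) p + suffixDescents n (n - 2*j - 1) p

/-- `R_{n,j}(x) = Σ_p x^{t_j(p)}` over `j`-half-ascending permutations `p`. -/
noncomputable def RpolyJ (n j : ℕ) : Polynomial ℤ :=
  ∑ p ∈ Finset.univ.filter (HalfAscJ n j), Polynomial.X ^ (tstat n j p)

/-- A labeled northeastern lattice path with `n` edges, encoded as a function assigning to the
`i`-th edge (0-indexed; the paper's edge `a_{i+1}`) a direction (`true` = vertical) and a label.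
Conditions (1)-(3) of the paper. -/
def IsLPath (n : ℕ) (f : Fin n → Bool × ℕ) : Prop :=
  (∀ i : Fin n, 1 ≤ (f i).2) ∧
  (∀ h : 0 < n, (f ⟨0, h⟩).1 = false ∧ (f ⟨0, h⟩).2 = 1) ∧
  (∀ i : ℕ, (h : i + 1 < n) →
    ((f ⟨i, Nat.lt_of_succ_lt h⟩).1 = (f ⟨i+1, h⟩).1 →
      (f ⟨i+1, h⟩).2 ≤ (f ⟨i, Nat.lt_of_succ_lt h⟩).2) ∧
    ((f ⟨i, Nat.lt_of_succ_lt h⟩).1 ≠ (f ⟨i+1, h⟩).1 →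
      (f ⟨i, Nat.lt_of_succ_lt h⟩).2 + (f ⟨i+1, h⟩).2 ≤ i + 2))

/-- The number of vertical edges of a labeled lattice path. -/
def vertCount (n : ℕ) (f : Fin n → Bool × ℕ) : ℕ :=
  (Finset.univ.filter (fun i : Fin n => (f i).1 = true)).card

lemma permVal_of_lt {n : ℕ} (p : Equiv.Perm (Fin n)) {i : ℕ} (h : i < n) :
    permVal n p i = p ⟨i, h⟩ :=
  dif_pos h

lemma permVal_ne {n : ℕ} (p : Equiv.Perm (Fin n)) {i j : ℕ} (hi : i < n) (hj : j < n)
    (hij : i ≠ j) : permVal n p i ≠ permVal n p j := by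
  rw [permVal_of_lt p hi, permVal_of_lt p hj, Ne, Fin.val_inj, p.injective.eq_iff, Fin.mk.injEq]
  exact hij

lemma permVal_mul_swap_of_ne {n : ℕ} (p : Equiv.Perm (Fin n)) {a b : Fin n} {i : ℕ}
    (hia : i ≠ a) (hib : i ≠ b) : permVal n (p * Equiv.swap a b) i = permVal n p i := by
  unfold permVal
  split_ifs with h
  · rw [Equiv.Perm.mul_apply, Equiv.swap_apply_of_ne_of_ne (Fin.ne_of_val_ne hia)
      (Fin.ne_of_val_ne hib)]
  · rfl

lemma permVal_mul_swap_left {n : ℕ} (p : Equiv.Perm (Fin n)) (a b : Fin n) :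
    permVal n (p * Equiv.swap a b) a = permVal n p b := by
  rw [permVal_of_lt _ a.isLt, permVal_of_lt _ b.isLt, Equiv.Perm.mul_apply,
    Equiv.swap_apply_left]

lemma permVal_mul_swap_right {n : ℕ} (p : Equiv.Perm (Fin n)) (a b : Fin n) :
    permVal n (p * Equiv.swap a b) b = permVal n p a := by
  rw [Equiv.swap_comm, permVal_mul_swap_left]

lemma even_card_filter_Ico_changes_iff (ε : ℕ → Prop) [DecidablePred ε] {a b : ℕ}
    (hab : a ≤ b) :
    Even ((Ico a b).filter (fun i => ¬(ε i ↔ ε (i + 1)))).card ↔ (ε a ↔ ε b) := by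
  induction b, hab using Nat.le_induction with
  | base => simp
  | succ b hab ih =>
    rw [Nat.Ico_succ_right_eq_insert_Ico hab, filter_insert]
    split_ifs
    · rw [ih]
      tauto
    · rw [card_insert_of_notMem (by simp), Nat.even_add_one, ih]
      tauto

def IsAscent (n : ℕ) (p : Equiv.Perm (Fin n)) (i : ℕ) : Prop :=
  permVal n p i < permVal n p (i + 1)

instance (n : ℕ) (p : Equiv.Perm (Fin n)) : DecidablePred (IsAscent n p) := fun i => by
  unfold IsAscent; infer_instance

lemma dirChange_iff_isAscent {n : ℕ} (p : Equiv.Perm (Fin n)) {i : ℕ} (hi : 1 ≤ i)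
    (hin : i + 1 < n) : dirChange n p i ↔ ¬(IsAscent n p (i - 1) ↔ IsAscent n p i) := by
  have hprev := permVal_ne p (i := i - 1) (j := i) (by omega) (by omega) (by omega)
  have hnext := permVal_ne p (i := i) (j := i + 1) (by omega) hin (by omega)
  unfold dirChange IsAscent
  rw [Nat.sub_add_cancel hi]
  omega

lemma odd_numRuns_iff {n : ℕ} (hn : 2 ≤ n) (p : Equiv.Perm (Fin n)) :
    Odd (numRuns n p) ↔ (IsAscent n p 0 ↔ IsAscent n p (n - 2)) := by
  have hchanges : (Ico 1 (n - 1)).filter (dirChange n p) =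
      (Ico 1 (n - 1)).filter (fun i => ¬(IsAscent n p (i - 1) ↔ IsAscent n p (i + 1 - 1))) :=
    filter_congr fun i hi => by
      obtain ⟨hi1, hi2⟩ := mem_Ico.1 hi
      rw [Nat.add_sub_cancel]
      exact dirChange_iff_isAscent p hi1 (by omega)
  unfold numRuns
  rw [Nat.odd_add_one, Nat.not_odd_iff_even, hchanges,
    even_card_filter_Ico_changes_iff (fun i => IsAscent n p (i - 1)) (by omega)]
  simp only [Nat.sub_self, Nat.sub_sub]

lemma numRuns_lt {n : ℕ} (hn : 2 ≤ n) (p : Equiv.Perm (Fin n)) : numRuns n p < n := by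
  have := card_filter_le (Ico 1 (n - 1)) (dirChange n p)
  rw [Nat.card_Ico] at this
  unfold numRuns
  omega

def swapLastTwo (n : ℕ) (hn : 2 ≤ n) : Equiv.Perm (Fin n) :=
  Equiv.swap ⟨n - 2, by omega⟩ ⟨n - 1, by omega⟩

lemma odd_numRuns_mul_swapLastTwo {n : ℕ} (hn : 4 ≤ n) (p : Equiv.Perm (Fin n)) :
    Odd (numRuns n (p * swapLastTwo n (by omega))) ↔ ¬Odd (numRuns n p) := by
  have hfirst : IsAscent n (p * swapLastTwo n (by omega)) 0 ↔ IsAscent n p 0 := by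
    unfold IsAscent swapLastTwo
    rw [permVal_mul_swap_of_ne _ (by simp; omega) (by simp; omega),
      permVal_mul_swap_of_ne _ (by simp; omega) (by simp; omega)]
  have hlast : IsAscent n (p * swapLastTwo n (by omega)) (n - 2) ↔ ¬IsAscent n p (n - 2) := by
    have hne := permVal_ne p (i := n - 2) (j := n - 1) (by omega) (by omega) (by omega)
    unfold IsAscent swapLastTwo
    rw [show n - 2 + 1 = n - 1 by omega,
      permVal_mul_swap_left p ⟨n - 2, by omega⟩ ⟨n - 1, by omega⟩,
      permVal_mul_swap_right p ⟨n - 2, by omega⟩ ⟨n - 1, by omega⟩]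
    dsimp only
    omega
  rw [odd_numRuns_iff (by omega), odd_numRuns_iff (by omega), hfirst, hlast]
  tauto

lemma card_odd_numRuns_eq_card_even {n : ℕ} (hn : 4 ≤ n) :
    (univ.filter (fun p : Equiv.Perm (Fin n) => Odd (numRuns n p))).card =
      (univ.filter (fun p : Equiv.Perm (Fin n) => Even (numRuns n p))).card := by
  have hinv (p : Equiv.Perm (Fin n)) :
      p * swapLastTwo n (by omega) * swapLastTwo n (by omega) = p := by
    rw [mul_assoc, swapLastTwo, Equiv.swap_mul_self, mul_one]
  refine card_nbij' (· * swapLastTwo n (by omega)) (· * swapLastTwo n (by omega))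
    (fun p hp => ?_) (fun p hp => ?_) (fun p _ => hinv p) (fun p _ => hinv p)
  · simp only [coe_filter, mem_univ, true_and, Set.mem_ofPred_eq] at hp ⊢
    rw [← Nat.not_odd_iff_even, odd_numRuns_mul_swapLastTwo hn, not_not]
    exact hp
  · simp only [coe_filter, mem_univ, true_and, Set.mem_ofPred_eq] at hp ⊢
    rw [odd_numRuns_mul_swapLastTwo hn, Nat.not_odd_iff_even]
    exact hp

lemma Rpoly_eval_neg_one {n : ℕ} (hn : 2 ≤ n) :
    (Rpoly n).eval (-1) =
      (univ.filter (fun p : Equiv.Perm (Fin n) => Even (numRuns n p))).card -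
      (univ.filter (fun p : Equiv.Perm (Fin n) => Odd (numRuns n p))).card := by
  have hfiber : ∀ k ∈ range n, (R n k : ℤ) * (-1) ^ k =
      ∑ p ∈ univ.filter (fun p : Equiv.Perm (Fin n) => numRuns n p = k),
        (-1) ^ numRuns n p := by
    intro k _
    rw [sum_congr rfl fun p hp => by rw [(mem_filter.1 hp).2], sum_const, R, nsmul_eq_mul]
  simp only [Rpoly, Polynomial.eval_finsetSum, Polynomial.eval_mul, Polynomial.eval_C,
    Polynomial.eval_pow, Polynomial.eval_X]
  rw [sum_congr rfl hfiber, sum_fiberwise_of_maps_to fun p _ => mem_range.2 (numRuns_lt hn p)]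
  simp only [neg_one_pow_eq_ite, sum_ite, sum_const, Nat.not_even_iff_odd, smul_neg,
    nsmul_eq_mul, mul_one]
  ring

/-- for `n ≥ 4`, as many permutations have an odd number of runs as an even
number of runs; equivalently, `(x+1)` divides `R_n(x)`. -/
theorem stmt2 (n : ℕ) (hn : 4 ≤ n) :
    (Finset.univ.filter (fun p : Equiv.Perm (Fin n) => Odd (numRuns n p))).card =
      (Finset.univ.filter (fun p : Equiv.Perm (Fin n) => Even (numRuns n p))).card ∧
    (Polynomial.X + 1) ∣ Rpoly n := by
  have hcard := card_odd_numRuns_eq_card_even hn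
  refine ⟨hcard, ?_⟩
  rw [← sub_neg_eq_add, ← Polynomial.C_1, ← Polynomial.C_neg, Polynomial.dvd_iff_isRoot,
    Polynomial.IsRoot, Rpoly_eval_neg_one (by omega), hcard, sub_self]
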